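/- If there exists an uncountable Δ-set X ⊆ 2^ω, then there exists a countable Boolean subalgebra A' of the power set of ω₁ (closed under finite unions, finite intersections and complements in ω₁) which separates points of ω₁ (for all distinct α, β ∈ ω₁ there is A ∈ A' with α ∈ A and β ∉ A), and such that for every vanishing sequence (F_n : n ∈ ℕ) of subsets of ω₁ there exists a vanishing sequence (G_n : n ∈ ℕ) of subsets of ω₁ with F_n ⊆ G_n for all n, where each G_n is a countable union of members of A'. -/

import Mathlib

/-- The Cantor space `2^ω`. -/
abbrev Cantor : Type := ℕ → Bool

/-- The first uncountable ordinal `ω₁`, as a type. -/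
abbrev Omega1 : Type := Ordinal.ToType (Ordinal.omega.{0} 1)

/-- A sequence of sets is *vanishing* if it is decreasing and has empty intersection. -/
def Vanishing {α : Type*} (F : ℕ → Set α) : Prop :=
  (∀ n, F (n + 1) ⊆ F n) ∧ (⋂ n, F n) = ∅

/-- An uncountable subset `X` of a topological space is a *Δ-set* if every vanishing
sequence of subsets of `X` admits a vanishing expansion by relatively open sets. -/
def IsDeltaSet {α : Type*} [TopologicalSpace α] (X : Set α) : Prop :=
  ¬ X.Countable ∧
    ∀ F : ℕ → Set X, Vanishing F →
      ∃ U : ℕ → Set X, (∀ n, IsOpen (U n)) ∧ Vanishing U ∧ ∀ n, F n ⊆ U n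

/-! Since `X` is uncountable, `ω₁` injects into `X`. Pull a countable base of `X` back to `ω₁`
and let `A` be the algebra of sets it generates. It is countable, and it separates points because
`X` is T₁. A vanishing sequence on `ω₁` is pushed forward to `X`, expanded there to a vanishing
sequence of relatively open sets, and pulled back; each pulled-back open set is a countable union
of pulled-back basic sets. -/

open Set Function TopologicalSpace MeasureTheory

theorem nonempty_omega1_embedding_of_not_countable {Z : Type*} (hZ : ¬ Countable Z) :
    Nonempty (Omega1 ↪ Z) := by
  rw [← Cardinal.lift_mk_le', Cardinal.mk_toType, Ordinal.card_omega, Cardinal.lift_aleph,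
    Ordinal.lift_one, Cardinal.aleph_one_le_iff, Cardinal.aleph0_lt_lift]
  exact not_le.mp (Cardinal.mk_le_aleph0_iff.not.mpr hZ)

theorem Vanishing.image {α β : Type*} {F : ℕ → Set α} (hF : Vanishing F) {f : α → β}
    (hf : Injective f) : Vanishing fun n => f '' F n := by
  refine ⟨fun n => image_mono (hF.1 n), ?_⟩
  rw [← hf.injOn.image_iInter_eq, hF.2, image_empty]

theorem Vanishing.preimage {α β : Type*} {U : ℕ → Set β} (hU : Vanishing U) (f : α → β) :
    Vanishing fun n => f ⁻¹' U n := by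
  refine ⟨fun n => preimage_mono (hU.1 n), ?_⟩
  rw [← preimage_iInter, hU.2, preimage_empty]

theorem Set.Countable.exists_sUnion_eq_iUnion {α : Type*} {S A : Set (Set α)} (hS : S.Countable)
    (hSA : S ⊆ A) (hA : ∅ ∈ A) : ∃ g : ℕ → Set α, (∀ k, g k ∈ A) ∧ ⋃₀ S = ⋃ k, g k := by
  obtain ⟨g, hg⟩ := (hS.insert ∅).exists_eq_range (insert_nonempty _ _)
  refine ⟨g, fun k => insert_subset hA hSA (hg ▸ mem_range_self k), ?_⟩
  rw [← sUnion_range, ← hg, sUnion_insert, empty_union]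

namespace TopologicalSpace.IsTopologicalBasis

variable {Y Z : Type*} [TopologicalSpace Z] {B : Set (Set Z)}

theorem exists_mem_notMem_of_ne [T1Space Z] (hB : IsTopologicalBasis B) {x y : Z} (h : x ≠ y) :
    ∃ b ∈ B, x ∈ b ∧ y ∉ b := by
  obtain ⟨b, hbB, hxb, hb⟩ := hB.exists_subset_of_mem_open h isOpen_compl_singleton
  exact ⟨b, hbB, hxb, fun hy => hb hy rfl⟩

theorem exists_preimage_eq_iUnion (hB : IsTopologicalBasis B) (hBc : B.Countable) (i : Y → Z)
    {A : Set (Set Y)} (hA : IsSetAlgebra A) (hBA : preimage i '' B ⊆ A) {U : Set Z}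
    (hU : IsOpen U) : ∃ g : ℕ → Set Y, (∀ k, g k ∈ A) ∧ i ⁻¹' U = ⋃ k, g k := by
  obtain ⟨S, hSB, rfl⟩ := hB.open_eq_sUnion hU
  rw [preimage_sUnion, ← sUnion_image]
  exact ((hBc.mono hSB).image _).exists_sUnion_eq_iUnion
    ((image_mono hSB).trans hBA) hA.empty_mem

end TopologicalSpace.IsTopologicalBasis

theorem exists_countable_isSetAlgebra_of_injective {Y Z : Type*} [TopologicalSpace Z] [T1Space Z]
    [SecondCountableTopology Z]
    (hZ : ∀ F : ℕ → Set Z, Vanishing F →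
      ∃ U : ℕ → Set Z, (∀ n, IsOpen (U n)) ∧ Vanishing U ∧ ∀ n, F n ⊆ U n)
    {i : Y → Z} (hi : Injective i) :
    ∃ A : Set (Set Y), A.Countable ∧ IsSetAlgebra A ∧
      (∀ x y : Y, x ≠ y → ∃ S ∈ A, x ∈ S ∧ y ∉ S) ∧
      ∀ F : ℕ → Set Y, Vanishing F →
        ∃ G : ℕ → Set Y, Vanishing G ∧ (∀ n, F n ⊆ G n) ∧
          ∀ n, ∃ g : ℕ → Set Y, (∀ k, g k ∈ A) ∧ G n = ⋃ k, g k := by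
  obtain ⟨B, hBc, -, hB⟩ := exists_countable_basis Z
  have hBA : preimage i '' B ⊆ generateSetAlgebra (preimage i '' B) :=
    self_subset_generateSetAlgebra
  refine ⟨generateSetAlgebra (preimage i '' B), countable_generateSetAlgebra (hBc.image _), isSetAlgebra_generateSetAlgebra,
    fun x y hxy => ?_, fun F hF => ?_⟩
  · obtain ⟨b, hbB, hxb, hyb⟩ := hB.exists_mem_notMem_of_ne (hi.ne hxy)
    exact ⟨i ⁻¹' b, hBA (mem_image_of_mem _ hbB), hxb, hyb⟩
  · obtain ⟨U, hUo, hUv, hFU⟩ := hZ _ (hF.image hi)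
    exact ⟨fun n => i ⁻¹' U n, hUv.preimage i,
      fun n => (subset_preimage_image i (F n)).trans (preimage_mono (hFU n)),
      fun n => hB.exists_preimage_eq_iUnion hBc i isSetAlgebra_generateSetAlgebra hBA (hUo n)⟩

/-- If there is an uncountable Δ-set `X ⊆ 2^ω`, then there is a countable subalgebra
`A` of `𝒫(ω₁)` (closed under finite unions, finite intersections and complements)
which separates points of `ω₁`, and such that every vanishing sequence of subsets of
`ω₁` admits a vanishing expansion by countable unions of members of `A`. -/
theorem exists_countable_algebra_of_delta_set (X : Set Cantor) (hX : IsDeltaSet X) :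
    ∃ A : Set (Set Omega1), A.Countable ∧
      (∀ S ∈ A, ∀ T ∈ A, S ∪ T ∈ A) ∧
      (∀ S ∈ A, ∀ T ∈ A, S ∩ T ∈ A) ∧
      (∀ S ∈ A, Sᶜ ∈ A) ∧
      (∀ α β : Omega1, α ≠ β → ∃ S ∈ A, α ∈ S ∧ β ∉ S) ∧
      ∀ F : ℕ → Set Omega1, Vanishing F →
        ∃ G : ℕ → Set Omega1, Vanishing G ∧ (∀ n, F n ⊆ G n) ∧
          ∀ n, ∃ g : ℕ → Set Omega1, (∀ k, g k ∈ A) ∧ G n = ⋃ k, g k := by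
  obtain ⟨hXu, hXΔ⟩ := hX
  obtain ⟨i⟩ := nonempty_omega1_embedding_of_not_countable (countable_coe_iff.not.mpr hXu)
  obtain ⟨A, hAc, hA, hsep, hvan⟩ := exists_countable_isSetAlgebra_of_injective hXΔ i.injective
  exact ⟨A, hAc, fun _ hS _ hT => hA.union_mem hS hT, fun _ hS _ hT => hA.inter_mem hS hT,
    fun _ hS => hA.compl_mem hS, hsep, hvan⟩
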